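/- arXiv:1707.06270 — 2 statements merged into one kernel-verified Lean document; each statement's English description precedes it below -/
import Mathlib

section
/- Let G be a finite group and σ ∈ S_n a permutation that is a product of k ≥ 1 disjoint cycles of lengths ℓ_1,...,ℓ_k ≥ 2 together with f = n - (ℓ_1 + ... + ℓ_k) fixed points. Then the number of homomorphisms Φ: K_n → G with Φ ∘ σ* = Φ equals |ord_d(G)| · |G|^(k + f - 1) if f = 0 where d = gcd(ℓ_1,...,ℓ_k), and equals |G|^(k + f - 1) if f ≥ 1. -/
/-!
A homomorphism `Φ : K_n → G` is the coboundary `Φ (a, b) = g a * (g b)⁻¹` of a potential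
`g : Fin n → G`, unique up to right multiplication by `G`, and `Φ` is fixed by `σ` exactly when
`g ∘ σ = g * h` for a constant `h`. For a fixed twist `h`, the solutions `g` are either empty or a
torsor under the `σ`-invariant functions, of which there are `|G| ^ (k + f)`, one free value per
cycle of `σ` (fixed points included). A solution exists iff `h ^ ℓ = 1` for every cycle length `ℓ`,
a fixed point counting as a cycle of length `1`, i.e. iff `h ^ d = 1` for the gcd `d` of the parts
of the cycle partition of `σ`. Counting pairs `(Φ, c)` therefore gives
`|Hom(K_n, G)^σ| * |G| = |ord_d(G)| * |G| ^ (k + f)`, where `d = gcd(ℓ_1, …, ℓ_k)` if `f = 0`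
and `d = 1` otherwise.
-/

/-- A homomorphism from the complete directed graph `K_n` to `G`. -/
def KHom {n : ℕ} {G : Type*} [Group G] (Φ : Fin n × Fin n → G) : Prop :=
  ∀ a b c : Fin n, Φ (a, b) * Φ (b, c) = Φ (a, c)

open Equiv Equiv.Perm MulAction Finset

section Twisted

variable {α G : Type*} [Group G]

def IsTwistedInvariant (σ : Perm α) (h : G) (g : α → G) : Prop :=
  ∀ a, g (σ a) = g a * h

namespace IsTwistedInvariant

variable {σ : Perm α} {h : G} {g g' u : α → G}

lemma apply_pow (hg : IsTwistedInvariant σ h g) (k : ℕ) (a : α) :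
    g ((σ ^ k) a) = g a * h ^ k := by
  induction k generalizing a with
  | zero => simp
  | succ k ih => rw [pow_succ, mul_apply, ih, hg, pow_succ', mul_assoc]

lemma pow_period_eq_one (hg : IsTwistedInvariant σ h g) (a : α) : h ^ period σ a = 1 := by
  have hfix : (σ ^ period σ a) a = a := pow_period_smul σ a
  have hpow := hg.apply_pow (period σ a) a
  rwa [hfix, left_eq_mul] at hpow

lemma mul_left (hg : IsTwistedInvariant σ h g) (hu : IsTwistedInvariant σ 1 u) :
    IsTwistedInvariant σ h (u * g) := fun a => by
  simp only [Pi.mul_apply, hu a, hg a, mul_one, mul_assoc]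

lemma mul_inv (hg : IsTwistedInvariant σ h g) (hg' : IsTwistedInvariant σ h g') :
    IsTwistedInvariant σ 1 (g * g'⁻¹) := fun a => by
  simp only [Pi.mul_apply, Pi.inv_apply, hg a, hg' a, mul_inv_rev, mul_one]
  group

def equivInvariant {e : α → G} (he : IsTwistedInvariant σ h e) :
    {g : α → G // IsTwistedInvariant σ h g} ≃ {u : α → G // IsTwistedInvariant σ 1 u} where
  toFun g := ⟨g.1 * e⁻¹, g.2.mul_inv he⟩
  invFun u := ⟨u.1 * e, he.mul_left u.2⟩
  left_inv g := by ext; simp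
  right_inv u := by ext; simp

end IsTwistedInvariant

variable {σ : Perm α}

lemma isTwistedInvariant_one_iff [Finite α] {u : α → G} :
    IsTwistedInvariant σ 1 u ↔ SameCycle.setoid σ ≤ Setoid.ker u := by
  refine ⟨fun hu a b hab => ?_, fun hu a => ?_⟩
  · obtain ⟨k, rfl⟩ := hab.exists_nat_pow_eq
    simpa using (hu.apply_pow k a).symm
  · rw [mul_one]
    exact (hu (sameCycle_apply_right.2 (SameCycle.refl σ a))).symm

lemma card_isTwistedInvariant_one [Finite α] :
    Nat.card {u : α → G // IsTwistedInvariant σ 1 u} =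
      Nat.card G ^ Nat.card (Quotient (SameCycle.setoid σ)) := by
  rw [Nat.card_congr ((Equiv.subtypeEquivRight fun u => isTwistedInvariant_one_iff).trans
    (Setoid.liftEquiv _)), Nat.card_fun]

lemma zpow_eq_zpow_of_zpow_apply_eq {h : G} (hh : ∀ a : α, h ^ period σ a = 1) {x : α}
    {i j : ℤ} (hij : (σ ^ i) x = (σ ^ j) x) : h ^ i = h ^ j := by
  have hfix : σ ^ (i - j) • x = x := by
    rw [sub_eq_neg_add, zpow_add, zpow_neg, Perm.smul_def, mul_apply, hij, ← mul_apply,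
      inv_mul_cancel, one_apply]
  have hdvd : (orderOf h : ℤ) ∣ i - j :=
    (Int.natCast_dvd_natCast.2 (orderOf_dvd_of_pow_eq_one (hh x))).trans
      (zpow_smul_eq_iff_period_dvd.1 hfix)
  rw [← mul_inv_eq_one, ← zpow_sub]
  exact orderOf_dvd_iff_zpow_eq_one.1 hdvd

lemma exists_isTwistedInvariant {h : G} (hh : ∀ a : α, h ^ period σ a = 1) :
    ∃ e : α → G, IsTwistedInvariant σ h e := by
  -- `e = h ^ i` at the `i`-th iterate of a chosen representative of each cycle.
  have hr (a : α) : ∃ i : ℤ, (σ ^ i) (Quotient.mk (SameCycle.setoid σ) a).out = a :=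
    Quotient.mk_out (s := SameCycle.setoid σ) a
  choose i hi using hr
  refine ⟨fun a => h ^ i a, fun a => ?_⟩
  have hσa := hi (σ a)
  rw [Quotient.sound (sameCycle_apply_left.2 (SameCycle.refl σ a))] at hσa
  rw [← zpow_add_one]
  refine zpow_eq_zpow_of_zpow_apply_eq hh (hσa.trans ?_)
  rw [add_comm, zpow_one_add, mul_apply, hi a]

open scoped Classical in
lemma card_isTwistedInvariant [Finite α] (h : G) :
    Nat.card {g : α → G // IsTwistedInvariant σ h g} =
      if ∀ a : α, h ^ period σ a = 1 then Nat.card G ^ Nat.card (Quotient (SameCycle.setoid σ))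
      else 0 := by
  split_ifs with hh
  · obtain ⟨e, he⟩ := exists_isTwistedInvariant hh
    rw [Nat.card_congr he.equivInvariant, card_isTwistedInvariant_one]
  · have : IsEmpty {g : α → G // IsTwistedInvariant σ h g} :=
      ⟨fun g => hh g.2.pow_period_eq_one⟩
    exact Nat.card_of_isEmpty

lemma card_isTwistedInvariant_pairs [Finite α] [Fintype G] :
    Nat.card {p : G × (α → G) // IsTwistedInvariant σ p.1 p.2} =
      Nat.card {h : G // ∀ a : α, h ^ period σ a = 1} *
        Nat.card G ^ Nat.card (Quotient (SameCycle.setoid σ)) := by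
  classical
  rw [Nat.card_congr (Equiv.subtypeProdEquivSigmaSubtype _), Nat.card_sigma]
  simp only [card_isTwistedInvariant]
  rw [Finset.sum_ite, sum_const_zero, add_zero, sum_const, smul_eq_mul,
    Nat.card_eq_fintype_card (α := {h : G // _}), Fintype.card_subtype]

end Twisted

section CycleStructure

variable {α : Type*} [Fintype α] [DecidableEq α] (σ : Perm α)

lemma period_eq_card_support_cycleOf {a : α} (ha : σ a ≠ a) :
    period σ a = #(σ.cycleOf a).support :=
  Nat.dvd_right_iff_eq.mp fun k => by
    rw [← pow_smul_eq_iff_period_dvd, Perm.smul_def, (σ.isCycleOn_support_cycleOf a).pow_apply_eq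
      ((mem_support_cycleOf_iff' ha).2 (SameCycle.refl σ a))]

lemma period_mem_cycleType {a : α} (ha : σ a ≠ a) : period σ a ∈ σ.cycleType := by
  rw [period_eq_card_support_cycleOf σ ha, cycleType_def]
  exact Multiset.mem_map_of_mem _ (cycleOf_mem_cycleFactorsFinset_iff.2 (mem_support.2 ha))

lemma exists_period_eq_of_mem_cycleType {ℓ : ℕ} (hℓ : ℓ ∈ σ.cycleType) :
    ∃ a : α, period σ a = ℓ := by
  rw [cycleType_def, Multiset.mem_map] at hℓ
  obtain ⟨c, hc, rfl⟩ := hℓ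
  obtain ⟨⟨a, ha, -⟩, hcσ⟩ := mem_cycleFactorsFinset_iff.1 hc
  have ha' : a ∈ c.support := mem_support.2 ha
  refine ⟨a, ?_⟩
  rw [period_eq_card_support_cycleOf σ (hcσ a ha' ▸ ha), ← cycle_is_cycleOf ha' hc]
  rfl

lemma parts_partition_eq :
    σ.partition.parts = σ.cycleType + Multiset.replicate (Fintype.card α - σ.cycleType.sum) 1 := by
  rw [parts_partition, sum_cycleType]

lemma mem_parts_partition_iff {ℓ : ℕ} : ℓ ∈ σ.partition.parts ↔ ∃ a : α, period σ a = ℓ := by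
  rw [parts_partition, Multiset.mem_add, Multiset.mem_replicate, ← card_compl,
    Finset.card_ne_zero]
  constructor
  · rintro (hℓ | ⟨⟨a, ha⟩, rfl⟩)
    · exact exists_period_eq_of_mem_cycleType σ hℓ
    · exact ⟨a, period_eq_one_iff.2 (by simpa using ha)⟩
  · rintro ⟨a, rfl⟩
    by_cases ha : σ a = a
    · exact .inr ⟨⟨a, by simpa using ha⟩, period_eq_one_iff.2 ha⟩
    · exact .inl (period_mem_cycleType σ ha)

lemma forall_pow_period_eq_one_iff {G : Type*} [Monoid G] {h : G} :
    (∀ a : α, h ^ period σ a = 1) ↔ h ^ σ.partition.parts.gcd = 1 := by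
  simp_rw [← orderOf_dvd_iff_pow_eq_one, Multiset.dvd_gcd, mem_parts_partition_iff]
  simp

def cycleOrFixedPoint (a : α) : σ.cycleFactorsFinset ⊕ Function.fixedPoints σ :=
  if ha : σ a = a then .inr ⟨a, ha⟩
  else .inl ⟨σ.cycleOf a, cycleOf_mem_cycleFactorsFinset_iff.2 (mem_support.2 ha)⟩

lemma ker_cycleOrFixedPoint : Setoid.ker (cycleOrFixedPoint σ) = SameCycle.setoid σ := by
  ext a b
  rw [Setoid.ker_def]
  change _ ↔ σ.SameCycle a b
  unfold cycleOrFixedPoint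
  by_cases ha : σ a = a <;> by_cases hb : σ b = b
  · simp only [ha, hb, dite_true, Sum.inr.injEq, Subtype.ext_iff]
    exact ⟨fun hab => hab ▸ SameCycle.refl σ a, fun hab => hab.eq_of_left ha⟩
  · simpa [ha, hb] using fun hab => hb (hab.apply_eq_self_iff.1 ha)
  · simpa [ha, hb] using fun hab => ha (hab.apply_eq_self_iff.2 hb)
  · simpa [ha, hb] using (sameCycle_iff_cycleOf_eq_of_mem_support (mem_support.2 ha)
      (mem_support.2 hb)).symm

lemma cycleOrFixedPoint_surjective : Function.Surjective (cycleOrFixedPoint σ) := by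
  rintro (⟨c, hc⟩ | ⟨a, ha⟩)
  · obtain ⟨⟨a, ha, -⟩, hcσ⟩ := mem_cycleFactorsFinset_iff.1 hc
    have ha' : a ∈ c.support := mem_support.2 ha
    refine ⟨a, ?_⟩
    rw [cycleOrFixedPoint, dif_neg (hcσ a ha' ▸ ha)]
    simp [cycle_is_cycleOf ha' hc]
  · exact ⟨a, dif_pos ha⟩

lemma card_quotient_sameCycle :
    Nat.card (Quotient (SameCycle.setoid σ)) = σ.partition.parts.card := by
  rw [← ker_cycleOrFixedPoint,
    Nat.card_congr (Setoid.quotientKerEquivOfSurjective _ (cycleOrFixedPoint_surjective σ)),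
    Nat.card_sum, Nat.card_eq_fintype_card (α := Function.fixedPoints σ), card_fixedPoints,
    parts_partition_eq, Multiset.card_add, Multiset.card_replicate, cycleType_def,
    Multiset.card_map]
  simp

end CycleStructure

namespace KHom

variable {n : ℕ} {G : Type*} [Group G] {Φ : Fin n × Fin n → G}

lemma apply_self (hΦ : KHom Φ) (a : Fin n) : Φ (a, a) = 1 :=
  mul_eq_left.1 (hΦ a a a)

lemma apply_eq_mul_inv (hΦ : KHom Φ) (a b x : Fin n) : Φ (a, b) = Φ (a, x) * (Φ (b, x))⁻¹ :=
  eq_mul_inv_iff_mul_eq.2 (hΦ a b x)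

end KHom

/-- `(Φ, c)` goes to the potential `a ↦ Φ (a, x₀) * c`, whose twist is `Φ (σ x₀, x₀)`
conjugated by `c`. -/
def fixedKHomProdEquiv {n : ℕ} {G : Type*} [Group G] (σ : Perm (Fin n)) (x₀ : Fin n) :
    {Φ : Fin n × Fin n → G // KHom Φ ∧ ∀ a b, Φ (σ a, σ b) = Φ (a, b)} × G ≃
      {p : G × (Fin n → G) // IsTwistedInvariant σ p.1 p.2} where
  toFun q := ⟨(q.2⁻¹ * q.1.1 (σ x₀, x₀) * q.2, fun a => q.1.1 (a, x₀) * q.2), fun a => by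
    obtain ⟨⟨Φ, hΦ, hσΦ⟩, c⟩ := q
    simp only
    rw [← hΦ (σ a) (σ x₀) x₀, hσΦ]
    group⟩
  invFun p := (⟨fun ab => p.1.2 ab.1 * (p.1.2 ab.2)⁻¹, fun a b c => by group, fun a b => by
    obtain ⟨⟨h, g⟩, hg⟩ := p
    change ∀ a, g (σ a) = g a * h at hg
    simp only [hg a, hg b]
    group⟩, p.1.2 x₀)
  left_inv q := by
    obtain ⟨⟨Φ, hΦ, hσΦ⟩, c⟩ := q
    ext ⟨a, b⟩
    · simp [hΦ.apply_eq_mul_inv a b x₀]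
    · simp [hΦ.apply_self]
  right_inv p := by
    obtain ⟨⟨h, g⟩, hg⟩ := p
    change ∀ a, g (σ a) = g a * h at hg
    ext a
    · simp [hg x₀, mul_assoc]
    · simp

/-- if `σ ∈ S_n` is a product of `k ≥ 1` disjoint cycles of lengths
`ℓ_1,...,ℓ_k ≥ 2` (recorded by `σ.cycleType`) together with `f = n - Σℓ_i` fixed
points, then the number of homomorphisms `K_n → G` fixed by `σ` is
`|ord_d(G)|·|G|^(k+f-1)` when `f = 0` (where `d = gcd(ℓ_1,...,ℓ_k)`) and
`|G|^(k+f-1)` when `f ≥ 1`. -/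
theorem stmt7 {G : Type*} [Group G] [Fintype G] (n : ℕ)
    (σ : Equiv.Perm (Fin n)) (hk : 1 ≤ σ.cycleType.card) :
    Nat.card {Φ : Fin n × Fin n → G //
        KHom Φ ∧ ∀ a b : Fin n, Φ (σ a, σ b) = Φ (a, b)} =
      if n - σ.cycleType.sum = 0 then
        Nat.card {g : G // g ^ σ.cycleType.gcd = 1} *
          Fintype.card G ^ (σ.cycleType.card + (n - σ.cycleType.sum) - 1)
      else
        Fintype.card G ^ (σ.cycleType.card + (n - σ.cycleType.sum) - 1) := by
  classical
  obtain ⟨x₀, -⟩ : σ.support.Nonempty := by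
    rw [Finset.nonempty_iff_ne_empty, Ne, support_eq_empty_iff, ← cycleType_eq_zero,
      ← Multiset.card_eq_zero]
    omega
  have hcount := Nat.card_congr (fixedKHomProdEquiv (G := G) σ x₀)
  simp_rw [Nat.card_prod, card_isTwistedInvariant_pairs, forall_pow_period_eq_one_iff,
    card_quotient_sameCycle, Nat.card_eq_fintype_card (α := G)] at hcount
  rw [parts_partition_eq, Fintype.card_fin, Multiset.card_add, Multiset.card_replicate] at hcount
  obtain ⟨m, hm⟩ : ∃ m, σ.cycleType.card + (n - σ.cycleType.sum) = m + 1 :=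
    Nat.exists_eq_add_one.2 (by omega)
  rw [hm, pow_succ, ← mul_assoc] at hcount
  rw [hm, Nat.add_sub_cancel, Nat.eq_of_mul_eq_mul_right Fintype.card_pos hcount]
  split_ifs with hf
  · rw [hf, Multiset.replicate_zero, add_zero]
  · have hgcd : (σ.cycleType + Multiset.replicate (n - σ.cycleType.sum) 1).gcd = 1 :=
      Nat.dvd_one.1 (Multiset.gcd_dvd
        (Multiset.mem_add.2 (.inr (Multiset.mem_replicate.2 ⟨hf, rfl⟩))))
    simp [hgcd]
end

section
/- For a finite group G and a prime p, |{g ∈ G : g^p = 1}| ≡ |G|^(p-1) (mod p). -/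
/-!
McKay's argument: the `p`-tuples in `G` with product `1` number `|G|^(p-1)`, since the last
entry is determined by the others, and cyclic rotation permutes them with order dividing `p`.
So their number is congruent mod `p` to the number of tuples fixed by rotation, and these are
the constant tuples `(g, …, g)` with `g ^ p = 1`.
-/

namespace Equiv.Perm.VectorsProdEqOne

variable {G : Type*} [Group G] {n : ℕ}

def rotateOne : Function.End (vectorsProdEqOne G n) := fun v => rotate v 1

theorem rotateOne_pow_apply (k : ℕ) (v : vectorsProdEqOne G n) :
    (rotateOne ^ k : Function.End (vectorsProdEqOne G n)) v = rotate v k := by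
  induction k with
  | zero => exact (rotate_zero v).symm
  | succ k ih => rw [pow_succ']; exact (congrArg rotateOne ih).trans (rotate_rotate v k 1)

theorem rotateOne_pow_self : (rotateOne : Function.End (vectorsProdEqOne G n)) ^ n = 1 :=
  funext fun v => (rotateOne_pow_apply n v).trans (rotate_length v)

def replicate (g : {g : G // g ^ n = 1}) : vectorsProdEqOne G n :=
  ⟨List.Vector.replicate n g.1, (List.prod_replicate n g.1).trans g.2⟩

theorem rotateOne_replicate (g : {g : G // g ^ n = 1}) : rotateOne (replicate g) = replicate g :=
  Subtype.ext (Subtype.ext (List.rotate_replicate g.1 n 1))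

theorem replicate_injective (hn : n ≠ 0) : Function.Injective (replicate (G := G) (n := n)) :=
  fun _ _ h => Subtype.ext (List.replicate_right_injective hn (congrArg (·.1.1) h))

theorem exists_replicate_eq_of_rotateOne_eq {v : vectorsProdEqOne G n} (hv : rotateOne v = v) :
    ∃ g, replicate g = v := by
  obtain ⟨g, hg⟩ :=
    List.rotate_one_eq_self_iff_eq_replicate.mp (congrArg (·.1.1) hv : v.1.1.rotate 1 = v.1.1)
  rw [v.1.2] at hg
  have hgn : g ^ n = 1 := by rw [← List.prod_replicate, ← hg]; exact v.2
  exact ⟨⟨g, hgn⟩, Subtype.ext (Subtype.ext hg.symm)⟩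

theorem card_fixedPoints_rotateOne (hn : n ≠ 0) :
    Nat.card (Function.fixedPoints (rotateOne : Function.End (vectorsProdEqOne G n))) =
      Nat.card {g : G // g ^ n = 1} := by
  refine (Nat.card_eq_of_bijective (fun g => ⟨replicate g, rotateOne_replicate g⟩) ⟨?_, ?_⟩).symm
  · exact fun _ _ h => replicate_injective hn (congrArg Subtype.val h)
  · rintro ⟨v, hv⟩
    obtain ⟨g, rfl⟩ := exists_replicate_eq_of_rotateOne_eq hv
    exact ⟨g, rfl⟩

end Equiv.Perm.VectorsProdEqOne

open Equiv.Perm Equiv.Perm.VectorsProdEqOne in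
/-- for a finite group `G` and a prime `p`,
`|{g ∈ G : g^p = 1}| ≡ |G|^(p-1) (mod p)`. -/
theorem stmt12 {G : Type*} [Group G] [Fintype G] (p : ℕ) (hp : p.Prime) :
    Nat.card {g : G // g ^ p = 1} ≡ Fintype.card G ^ (p - 1) [MOD p] := by
  have := Fact.mk hp
  classical
  have hrot : (rotateOne : Function.End (vectorsProdEqOne G p)) ^ p ^ 1 = 1 := by
    rw [pow_one]; exact rotateOne_pow_self
  calc Nat.card {g : G // g ^ p = 1}
      = Nat.card (Function.fixedPoints (rotateOne : Function.End (vectorsProdEqOne G p))) :=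
        (card_fixedPoints_rotateOne hp.ne_zero).symm
    _ ≡ Nat.card (vectorsProdEqOne G p) [MOD p] := by
        simpa only [Fintype.card_eq_nat_card] using (card_fixedPoints_modEq hrot).symm
    _ = Fintype.card G ^ (p - 1) := by rw [Nat.card_eq_fintype_card, VectorsProdEqOne.card]
end
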